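/- arXiv:2510.18983 — 2 statements merged into one kernel-verified Lean document; each statement's English description precedes it below -/
import Mathlib

section
/- In a Sinai billiard with finite horizon (minimum free-flight time τ_min > 0), for each T > 0 the number of periodic orbits of the billiard flow with period at most T is finite. -/
/-!
A periodic point `x` of period `q` has a coding that is periodic up to the translation by the
`ℤ²`-label of its `q`-th symbol, so `iota x` is determined by its window on `[0, q]`. Since the
labels start at `(0, 0)` and move by at most `Kb` per step, these windows range over a finite set,
and injectivity of `iota` leaves finitely many points of each period. Flight times are at least
`τmin`, so an orbit of flow period at most `T` has billiard-map period at most `T / τmin`.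
-/

open Function Set

section Coding

variable {M G α : Type*} [AddCommGroup G]

def ShiftsUpToTranslation (f : M → M) (c : M → ℤ → G × α) : Prop :=
  ∀ x, ∃ t : G, ∀ i, c (f x) i = ((c x (i + 1)).1 + t, (c x (i + 1)).2)

theorem ShiftsUpToTranslation.iterate {f : M → M} {c : M → ℤ → G × α}
    (hc : ShiftsUpToTranslation f c) (n : ℕ) (x : M) :
    ∃ t : G, ∀ i, c (f^[n] x) i = ((c x (i + n)).1 + t, (c x (i + n)).2) := by
  induction n generalizing x with
  | zero => exact ⟨0, fun i => by simp⟩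
  | succ n ih =>
    obtain ⟨t, ht⟩ := ih (f x)
    obtain ⟨s, hs⟩ := hc x
    refine ⟨s + t, fun i => ?_⟩
    rw [iterate_succ_apply, ht, hs, show i + n + 1 = i + (n + 1 : ℕ) by push_cast; ring, add_assoc]

theorem ShiftsUpToTranslation.apply_add_period {f : M → M} {c : M → ℤ → G × α}
    (hc : ShiftsUpToTranslation f c) {x : M} (hx0 : (c x 0).1 = 0) {q : ℕ}
    (hx : IsPeriodicPt f q x) (i : ℤ) :
    c x (i + q) = ((c x i).1 + (c x q).1, (c x i).2) := by
  obtain ⟨t, ht⟩ := hc.iterate q x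
  rw [hx.eq] at ht
  have ht_eq : t = -(c x q).1 := by
    have := congrArg Prod.fst (ht 0)
    rw [hx0, zero_add] at this
    exact eq_neg_of_add_eq_zero_right this.symm
  have hi := ht i
  rw [ht_eq, ← sub_eq_add_neg] at hi
  rw [hi]
  simp

theorem eq_of_eq_on_window {s s' : ℤ → G × α} {q : ℕ} (hq : 0 < q)
    (hs : ∀ i, s (i + q) = ((s i).1 + (s q).1, (s i).2))
    (hs' : ∀ i, s' (i + q) = ((s' i).1 + (s' q).1, (s' i).2))
    (hwin : ∀ n ≤ q, s n = s' n) : s = s' := by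
  have hperiodic : Periodic (fun i => s i = s' i) (q : ℤ) := fun i => by
    simp only [hs, hs', hwin q le_rfl, Prod.ext_iff, add_left_inj]
  funext i
  have hr : i % q + i / q * q = i := Int.emod_add_ediv_mul i q
  have hr0 : 0 ≤ i % q := Int.emod_nonneg i (by omega)
  have hrq : i % q < q := Int.emod_lt_of_pos i (by omega)
  have := hwin (i % q).toNat (by omega)
  rw [Int.toNat_of_nonneg hr0] at this
  have hshifted := hperiodic.int_mul (i / q) (i % q)
  rw [Int.cast_id, hr] at hshifted
  exact hshifted ▸ this

end Coding

theorem abs_le_mul_of_abs_sub_le {u : ℕ → ℤ} {K : ℤ} (h0 : u 0 = 0)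
    (hstep : ∀ p, |u (p + 1) - u p| ≤ K) (n : ℕ) : |u n| ≤ K * n := by
  induction n with
  | zero => simp [h0]
  | succ n ih =>
    calc |u (n + 1)| ≤ |u (n + 1) - u n| + |u n| := sub_le_iff_le_add.mp (abs_sub_abs_le_abs_sub _ _)
      _ ≤ K + K * n := add_le_add (hstep n) ih
      _ = K * (n + 1 : ℕ) := by push_cast; ring

theorem finite_setOf_isPeriodicPt {M α : Type*} [Finite α] {f : M → M}
    {c : M → ℤ → (ℤ × ℤ) × α} (hinj : Injective c) (hc : ShiftsUpToTranslation f c)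
    (hzero : ∀ x, (c x 0).1 = 0) (K : ℤ)
    (hstep : ∀ x p, |(c x (p + 1)).1.1 - (c x p).1.1| + |(c x (p + 1)).1.2 - (c x p).1.2| ≤ K)
    {q : ℕ} (hq : 0 < q) :
    {x | IsPeriodicPt f q x}.Finite := by
  set B := K * q
  have hlabel : ∀ x (n : ℕ), n ≤ q → (c x n).1 ∈ Icc (-B) B ×ˢ Icc (-B) B := by
    intro x n hn
    have hK : K * n ≤ B := by
      have : 0 ≤ K := le_trans (by positivity) (hstep x 0)
      exact mul_le_mul_of_nonneg_left (by exact_mod_cast hn) this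
    have hcoord (g : ℤ × ℤ → ℤ) (hg : g 0 = 0)
        (hg_step : ∀ p, |g (c x (p + 1)).1 - g (c x p).1| ≤ K) : g (c x n).1 ∈ Icc (-B) B := by
      have := abs_le_mul_of_abs_sub_le (u := fun p : ℕ => g (c x p).1) (by simp [hzero, hg])
        (fun p => by exact_mod_cast hg_step p) n
      exact abs_le.mp (this.trans hK)
    exact ⟨hcoord Prod.fst rfl fun p => le_trans (le_add_of_nonneg_right (abs_nonneg _)) (hstep x p),
      hcoord Prod.snd rfl fun p => le_trans (le_add_of_nonneg_left (abs_nonneg _)) (hstep x p)⟩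
  let window : M → Fin (q + 1) → (ℤ × ℤ) × α := fun x n => c x (n : ℕ)
  refine Finite.of_finite_image (f := window) ?_ fun x hx y hy hxy => hinj ?_
  · refine (Finite.pi (t := fun _ => (Icc (-B) B ×ˢ Icc (-B) B) ×ˢ univ)
      fun _ => ((finite_Icc _ _).prod (finite_Icc _ _)).prod finite_univ).subset ?_
    rintro _ ⟨x, -, rfl⟩ n -
    exact ⟨hlabel x n (Nat.lt_succ_iff.mp n.isLt), mem_univ _⟩
  · exact eq_of_eq_on_window hq (hc.apply_add_period (hzero x) hx)
      (hc.apply_add_period (hzero y) hy) fun n hn => congrFun hxy ⟨n, Nat.lt_succ_of_le hn⟩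

theorem card_le_div_of_sum_le {ι : Type*} (s : Finset ι) {τ : ι → ℝ} {τmin T : ℝ} (hτmin : 0 < τmin)
    (hτ : ∀ i ∈ s, τmin ≤ τ i) (hsum : ∑ i ∈ s, τ i ≤ T) : (s.card : ℝ) ≤ T / τmin := by
  rw [le_div_iff₀ hτmin, ← nsmul_eq_mul]
  exact (s.card_nsmul_le_sum τ τmin hτ).trans hsum

theorem finitely_many_periodic_orbits_general
    {M : Type*} (k : ℕ) (f : M → M) (iota : M → ℤ → (ℤ × ℤ) × Fin k)
    (τ : M → ℝ) (τmin : ℝ) (hτmin : 0 < τmin) (hτ : ∀ x, τmin ≤ τ x)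
    (hinj : Function.Injective iota)
    (hshift : ∀ x : M, ∃ t : ℤ × ℤ, ∀ i : ℤ,
      iota (f x) i =
        (((iota x (i + 1)).1.1 + t.1, (iota x (i + 1)).1.2 + t.2), (iota x (i + 1)).2))
    (hzero : ∀ x : M, (iota x 0).1 = (0, 0))
    (Kb : ℕ) (hstep : ∀ x : M, ∀ p : ℤ,
      |(iota x (p + 1)).1.1 - (iota x p).1.1| +
        |(iota x (p + 1)).1.2 - (iota x p).1.2| ≤ (Kb : ℤ))
    (T : ℝ) :
    Set.Finite {x : M | ∃ q : ℕ, 1 ≤ q ∧ f^[q] x = x ∧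
      (∑ p ∈ Finset.range q, τ (f^[p] x)) ≤ T} := by
  refine ((finite_Icc 1 ⌊T / τmin⌋₊).biUnion fun q hq =>
    finite_setOf_isPeriodicPt hinj hshift hzero Kb hstep hq.1).subset ?_
  rintro x ⟨q, hq, hper, hsum⟩
  have hqT : (q : ℝ) ≤ T / τmin := by
    simpa using card_le_div_of_sum_le (Finset.range q) hτmin (fun p _ => hτ (f^[p] x)) hsum
  exact mem_biUnion ⟨hq, Nat.le_floor hqT⟩ hper

/-- In a Sinai billiard with finite horizon, for each `T > 0` the set of periodic
points of the billiard map whose orbit under the billiard flow has period (total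
flight time) at most `T` is finite.  The billiard is encoded abstractly: `f` is the
billiard map on the collision space `M`, `τ` the free-flight time bounded below by
`τmin > 0`, and `iota` an injective symbolic coding into `A^ℤ` with
`A = ℤ² × {1,…,k}`, shift-equivariant up to a `ℤ²`-translation, starting in the
fundamental cell `(0,0)`, and changing the `ℤ²`-label by at most `Kb` at each step. -/
theorem finitely_many_periodic_orbits
    {M : Type*} (k : ℕ) (f : M → M) (iota : M → ℤ → (ℤ × ℤ) × Fin k)
    (τ : M → ℝ) (τmin : ℝ) (hτmin : 0 < τmin) (hτ : ∀ x, τmin ≤ τ x)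
    (hinj : Function.Injective iota)
    (hshift : ∀ x : M, ∃ t : ℤ × ℤ, ∀ i : ℤ,
      iota (f x) i =
        (((iota x (i + 1)).1.1 + t.1, (iota x (i + 1)).1.2 + t.2), (iota x (i + 1)).2))
    (hzero : ∀ x : M, (iota x 0).1 = (0, 0))
    (Kb : ℕ) (hstep : ∀ x : M, ∀ p : ℤ,
      |(iota x (p + 1)).1.1 - (iota x p).1.1| +
        |(iota x (p + 1)).1.2 - (iota x p).1.2| ≤ (Kb : ℤ))
    (T : ℝ) (hT : 0 < T) :
    Set.Finite {x : M | ∃ q : ℕ, 1 ≤ q ∧ f^[q] x = x ∧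
      (∑ p ∈ Finset.range q, τ (f^[p] x)) ≤ T} :=
  finitely_many_periodic_orbits_general k f iota τ τmin hτmin hτ hinj hshift hzero Kb hstep T
end

section
/- Let L : ℝ^{q+1} → ℝ be a C² function whose Hessian at a point is a symmetric tridiagonal matrix with entries ∂_{00}L = cos²φ₀/τ₀ + K₀ cos φ₀, ∂_{jj}L = (1/τ_{j-1} + 1/τ_j) cos²φ_j + 2K_j cos φ_j for 0 < j < q, ∂_{qq}L = cos²φ_q/τ_{q-1} + K_q cos φ_q, and ∂_{j,j+1}L = cos φ_j cos φ_{j+1}/τ_j, where all τ_j > 0, K_j > 0 and φ_j ∈ (−π/2, π/2). Then this Hessian matrix is positive definite. -/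
/-!
Writing `c_j = cos φ_j`, the quadratic form of the Hessian is
`∑_{j<q} (c_j x_j + c_{j+1} x_{j+1})² / τ_j + ∑_j k_j K_j c_j x_j²` with `k_j ∈ {1, 2}`:
expanding the squares produces exactly the off-diagonal entries and the `cos²φ_j / τ` parts of
the diagonal. The first sum is nonnegative and the second is positive for `x ≠ 0`, since
`K_j > 0` and `c_j > 0`.
-/

/-- `A i` is the weight of the pair `(i - 1, i)`; the boundary weights `A 0` and `A (n + 1)`
only enlarge the right-hand side. -/
theorem Fin.sum_mul_adjacent_add_sq_le {R : Type*} [CommRing R] [LinearOrder R]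
    [IsStrictOrderedRing R] {n : ℕ} (A : ℕ → R) (hA : ∀ j, 0 ≤ A j)
    (u : Fin (n + 1) → R) :
    ∑ j : Fin n, A (j + 1) * (u j.castSucc + u j.succ) ^ 2
      ≤ ∑ i : Fin (n + 1), (A i + A (i + 1)) * u i ^ 2
        + 2 * ∑ j : Fin n, A (j + 1) * u j.castSucc * u j.succ := by
  have hleft : ∑ i : Fin (n + 1), A i * u i ^ 2
      = A 0 * u 0 ^ 2 + ∑ j : Fin n, A (j + 1) * u j.succ ^ 2 := by
    simp [Fin.sum_univ_succ]
  have hright : ∑ i : Fin (n + 1), A (i + 1) * u i ^ 2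
      = ∑ j : Fin n, A (j + 1) * u j.castSucc ^ 2 + A (n + 1) * u (Fin.last n) ^ 2 := by
    simp [Fin.sum_univ_castSucc]
  have hexpand : ∑ j : Fin n, A (j + 1) * (u j.castSucc + u j.succ) ^ 2
      = ∑ j : Fin n, A (j + 1) * u j.castSucc ^ 2 + ∑ j : Fin n, A (j + 1) * u j.succ ^ 2
        + 2 * ∑ j : Fin n, A (j + 1) * u j.castSucc * u j.succ := by
    simp only [Finset.mul_sum, ← Finset.sum_add_distrib]
    exact Finset.sum_congr rfl fun j _ => by ring
  simp only [add_mul, Finset.sum_add_distrib, hleft, hright, hexpand]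
  linarith [mul_nonneg (hA 0) (sq_nonneg (u 0)),
    mul_nonneg (hA (n + 1)) (sq_nonneg (u (Fin.last n)))]

namespace Matrix

variable {R : Type*} [CommRing R] {n : ℕ}

theorem dotProduct_mulVec_of_tridiagonal
    (H : Matrix (Fin (n + 1)) (Fin (n + 1)) R) (hsymm : H.IsSymm)
    (hzero : ∀ i j : Fin (n + 1), (i : ℕ) + 1 < j → H i j = 0) (x : Fin (n + 1) → R) :
    x ⬝ᵥ H *ᵥ x = ∑ i, H i i * x i ^ 2
      + 2 * ∑ i : Fin n, H i.castSucc i.succ * x i.castSucc * x i.succ := by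
  induction n with
  | zero => simp [dotProduct, mulVec, sq, mul_comm, mul_left_comm]
  | succ n ih =>
    have hrow : ∑ k : Fin (n + 1), H 0 k.succ * x k.succ = H 0 1 * x 1 := by
      rw [Fin.sum_univ_succ, Fintype.sum_eq_zero _ fun k => by
        rw [hzero 0 k.succ.succ (by simp), zero_mul], add_zero]
      rfl
    have hcol : ∑ i : Fin (n + 1), x i.succ * (H i.succ 0 * x 0) = H 0 1 * x 0 * x 1 := by
      rw [Fin.sum_univ_succ, Fintype.sum_eq_zero _ fun k => by
        rw [hsymm.apply, hzero 0 k.succ.succ (by simp), zero_mul, mul_zero], add_zero,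
        hsymm.apply]
      simp only [Fin.succ_zero_eq_one]; ring
    have := ih (H.submatrix Fin.succ Fin.succ) (hsymm.submatrix _)
      (fun i j h => hzero _ _ (by simpa using h)) (x ∘ Fin.succ)
    simp only [dotProduct, mulVec, Fin.sum_univ_succ (n := n + 1), mul_add,
      Finset.sum_add_distrib, hrow, hcol] at this ⊢
    simp only [submatrix_apply, Function.comp_apply, Fin.succ_castSucc] at this
    rw [this, Fin.sum_univ_succ (fun i : Fin (n + 1) => H i.castSucc i.succ * _ * _)]
    simp only [Fin.castSucc_zero, Fin.succ_zero_eq_one]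
    ring

theorem sum_mul_sq_le_dotProduct_mulVec_of_tridiagonal [LinearOrder R]
    [IsStrictOrderedRing R]
    (H : Matrix (Fin (n + 1)) (Fin (n + 1)) R) (hsymm : H.IsSymm)
    (hzero : ∀ i j : Fin (n + 1), (i : ℕ) + 1 < j → H i j = 0) (A c d : ℕ → R)
    (hA : ∀ j, 0 ≤ A j)
    (hoff : ∀ j : Fin n, H j.castSucc j.succ = A (j + 1) * c j * c (j + 1))
    (hdiag : ∀ i : Fin (n + 1), (A i + A (i + 1)) * c i ^ 2 + d i ≤ H i i)
    (x : Fin (n + 1) → R) :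
    ∑ i : Fin (n + 1), d i * x i ^ 2 ≤ x ⬝ᵥ H *ᵥ x := by
  set u : Fin (n + 1) → R := fun i => c i * x i
  have hsquares : 0 ≤ ∑ j : Fin n, A (j + 1) * (u j.castSucc + u j.succ) ^ 2 :=
    Finset.sum_nonneg fun j _ => mul_nonneg (hA _) (sq_nonneg _)
  have hdiag_sum : ∑ i : Fin (n + 1), ((A i + A (i + 1)) * u i ^ 2 + d i * x i ^ 2)
      ≤ ∑ i, H i i * x i ^ 2 :=
    Finset.sum_le_sum fun i _ => by
      have := mul_le_mul_of_nonneg_right (hdiag i) (sq_nonneg (x i))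
      simp only [u]; linarith
  have hoff_sum : ∑ j : Fin n, H j.castSucc j.succ * x j.castSucc * x j.succ
      = ∑ j : Fin n, A (j + 1) * u j.castSucc * u j.succ :=
    Finset.sum_congr rfl fun j _ => by simp only [hoff, u, Fin.val_castSucc, Fin.val_succ]; ring
  rw [dotProduct_mulVec_of_tridiagonal H hsymm hzero, hoff_sum]
  rw [Finset.sum_add_distrib] at hdiag_sum
  linarith [Fin.sum_mul_adjacent_add_sq_le A hA u]

theorem posDef_of_tridiagonal {n : ℕ}
    (H : Matrix (Fin (n + 1)) (Fin (n + 1)) ℝ) (hsymm : H.IsSymm)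
    (hzero : ∀ i j : Fin (n + 1), (i : ℕ) + 1 < j → H i j = 0) (A c d : ℕ → ℝ)
    (hA : ∀ j, 0 ≤ A j) (hd : ∀ i : Fin (n + 1), 0 < d i)
    (hoff : ∀ j : Fin n, H j.castSucc j.succ = A (j + 1) * c j * c (j + 1))
    (hdiag : ∀ i : Fin (n + 1), (A i + A (i + 1)) * c i ^ 2 + d i ≤ H i i) :
    H.PosDef := by
  refine posDef_iff_dotProduct_mulVec.mpr ⟨isHermitian_iff_isSymm.mpr hsymm, fun x hx => ?_⟩
  obtain ⟨i, hi⟩ := Function.ne_iff.mp hx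
  have hpos : 0 < ∑ i : Fin (n + 1), d i * x i ^ 2 :=
    Finset.sum_pos' (fun i _ => mul_nonneg (hd i).le (sq_nonneg _))
      ⟨i, Finset.mem_univ _, mul_pos (hd i) (pow_two_pos_of_ne_zero hi)⟩
  simpa using hpos.trans_le
    (sum_mul_sq_le_dotProduct_mulVec_of_tridiagonal H hsymm hzero A c d hA hoff hdiag x)

theorem posDef_of_tridiagonal_of_edge_weights {n : ℕ} (hn : 1 ≤ n)
    (H : Matrix (Fin (n + 1)) (Fin (n + 1)) ℝ) (hsymm : H.IsSymm)
    (hzero : ∀ i j : Fin (n + 1), (i : ℕ) + 1 < j → H i j = 0) (w c d : ℕ → ℝ)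
    (hw : ∀ j < n, 0 ≤ w j) (hd : ∀ i : Fin (n + 1), 0 < d i)
    (hoff : ∀ j : Fin n, H j.castSucc j.succ = w j * c j * c (j + 1))
    (hfirst : w 0 * c 0 ^ 2 + d 0 ≤ H 0 0)
    (hmid : ∀ i : Fin (n + 1), 0 < (i : ℕ) → (i : ℕ) < n →
      (w (i - 1) + w i) * c i ^ 2 + d i ≤ H i i)
    (hlast : w (n - 1) * c n ^ 2 + d n ≤ H (Fin.last n) (Fin.last n)) :
    H.PosDef := by
  set A : ℕ → ℝ := Set.indicator (Set.Icc 1 n) fun j => w (j - 1)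
  have hA : ∀ j, 1 ≤ j → j ≤ n → A j = w (j - 1) := fun j h1 h2 =>
    Set.indicator_of_mem (Set.mem_Icc.mpr ⟨h1, h2⟩) _
  have hA0 : A 0 = 0 := Set.indicator_of_notMem (by simp) _
  have hAn : A (n + 1) = 0 := Set.indicator_of_notMem (by simp) _
  refine posDef_of_tridiagonal H hsymm hzero A c d
    (Set.indicator_nonneg fun j hj => hw _ (by grind)) hd
    (fun j => by rw [hoff, hA (j + 1) (by omega) (by omega), Nat.add_sub_cancel]) fun i => ?_
  by_cases h0 : (i : ℕ) = 0
  · obtain rfl : i = 0 := Fin.ext h0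
    simpa [hA0, hA 1 le_rfl hn] using hfirst
  by_cases hl : (i : ℕ) = n
  · obtain rfl : i = Fin.last n := Fin.ext hl
    simpa [hAn, hA n hn le_rfl] using hlast
  · rw [hA i (by omega) i.is_le, hA (i + 1) (by omega) (by omega), Nat.add_sub_cancel]
    exact hmid i (by omega) (by omega)

end Matrix

open Real

/-- The Hessian of the length functional of a periodic billiard orbit in a dispersing
billiard — a symmetric tridiagonal matrix with diagonal entries
`cos²φ₀/τ₀ + K₀ cos φ₀`, `(1/τ_{j-1} + 1/τ_j) cos²φ_j + 2K_j cos φ_j`,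
`cos²φ_q/τ_{q-1} + K_q cos φ_q` and off-diagonal entries
`cos φ_j cos φ_{j+1} / τ_j`, where `τ_j > 0`, `K_j > 0`,
`φ_j ∈ (-π/2, π/2)` — is positive definite. -/
theorem billiard_hessian_posDef (q : ℕ) (hq : 1 ≤ q)
    (τ φ κ : ℕ → ℝ)
    (hτ : ∀ j, j < q → 0 < τ j)
    (hκ : ∀ j, j ≤ q → 0 < κ j)
    (hφ : ∀ j, j ≤ q → φ j ∈ Set.Ioo (-(π / 2)) (π / 2))
    (H : Matrix (Fin (q + 1)) (Fin (q + 1)) ℝ)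
    (hsymm : H.IsSymm)
    (h00 : H 0 0 = Real.cos (φ 0) ^ 2 / τ 0 + κ 0 * Real.cos (φ 0))
    (hjj : ∀ i : Fin (q + 1), 0 < (i : ℕ) → (i : ℕ) < q →
      H i i = (1 / τ ((i : ℕ) - 1) + 1 / τ (i : ℕ)) * Real.cos (φ (i : ℕ)) ^ 2
        + 2 * κ (i : ℕ) * Real.cos (φ (i : ℕ)))
    (hqq : H (Fin.last q) (Fin.last q)
      = Real.cos (φ q) ^ 2 / τ (q - 1) + κ q * Real.cos (φ q))
    (hoff : ∀ i j : Fin (q + 1), (j : ℕ) = (i : ℕ) + 1 →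
      H i j = Real.cos (φ (i : ℕ)) * Real.cos (φ (j : ℕ)) / τ (i : ℕ))
    (hzero : ∀ i j : Fin (q + 1), (i : ℕ) + 1 < (j : ℕ) → H i j = 0) :
    H.PosDef := by
  have hd : ∀ i : Fin (q + 1), 0 < κ i * cos (φ i) := fun i =>
    mul_pos (hκ i i.is_le) (cos_pos_of_mem_Ioo (hφ i i.is_le))
  refine Matrix.posDef_of_tridiagonal_of_edge_weights hq H hsymm hzero (fun j => 1 / τ j)
    (fun j => cos (φ j)) (fun j => κ j * cos (φ j))
    (fun j hj => (one_div_pos.mpr (hτ j hj)).le) hd (fun j => ?_) (le_of_eq ?_)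
    (fun i hi0 hiq => ?_) (le_of_eq ?_)
  · rw [hoff _ _ (by simp)]
    simp only [Fin.val_castSucc, Fin.val_succ]
    ring
  · rw [h00]
    ring
  · rw [hjj i hi0 hiq]
    linarith [hd i]
  · rw [hqq]
    ring
end
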